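/- For every m ≥ 1 and every p ≥ 1, the p-th return word of the envelope word E_{1,m} in the period-doubling sequence D satisfies: r_p(E_{1,m}) = A_m if Θ_1[p] = a, and r_p(E_{1,m}) = A_{m−1} if Θ_1[p] = b. In other words, the return word sequence {r_p(E_{1,m})}_{p≥1} is the sequence Θ_1 over the alphabet {A_m, A_{m−1}}. -/

import Mathlib

/-- The alphabet: letters a, b (for the period-doubling sequence) and c (used by Θ₂). -/
inductive Letter : Type
  | a | b | c
deriving DecidableEq, Repr

open Letter

/-- The period-doubling substitution σ : a ↦ ab, b ↦ aa, extended to words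
(the extra letter c is left untouched; it is never produced). -/
def sigmaw : List Letter → List Letter :=
  fun w => w.flatMap fun x => match x with
    | .a => [.a, .b]
    | .b => [.a, .a]
    | .c => [.c]

/-- A_m = σ^m(a). -/
def A (m : ℕ) : List Letter := sigmaw^[m] [.a]

/-- B_m = σ^m(b). -/
def B (m : ℕ) : List Letter := sigmaw^[m] [.b]

/-- δ_m, the last letter of A_m. -/
def delta (m : ℕ) : Letter := (A m).getLastD .a

/-- The period-doubling sequence D, as a function giving its (n+1)-st letter
(0-indexed); it is the fixed point of σ beginning with a, and A_{n+1} is a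
prefix of it of length 2^{n+1} > n. -/
def D (n : ℕ) : Letter := (A (n + 1)).getD n .a

/-- The finite segment D[i .. i+len−1] of the period-doubling sequence,
with 1-based starting position i. -/
def Dseg (i len : ℕ) : List Letter := (List.range len).map fun k => D (i - 1 + k)

/-- u occurs in the finite word w at (1-based) position i. -/
def OccursAt {α : Type*} (u w : List α) (i : ℕ) : Prop :=
  1 ≤ i ∧ i - 1 + u.length ≤ w.length ∧ (w.drop (i - 1)).take u.length = u

/-- u is a factor of the finite word w. -/
def IsFactor {α : Type*} (u w : List α) : Prop := ∃ i, OccursAt u w i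

/-- u occurs in the period-doubling sequence D at (1-based) position i. -/
def DOccursAt (u : List Letter) (i : ℕ) : Prop := 1 ≤ i ∧ Dseg i u.length = u

/-- u is a factor of the period-doubling sequence D. -/
def FactorD (u : List Letter) : Prop := ∃ i, DOccursAt u i

/-- L(u,p): the starting position of the p-th occurrence (p ≥ 1) of u in D. -/
noncomputable def L (u : List Letter) (p : ℕ) : ℕ := Nat.nth (DOccursAt u) (p - 1)

/-- r_p(u): the p-th return word of u (p ≥ 1), i.e. D[L(u,p) .. L(u,p+1)−1];
r_0(u) is the prefix of D preceding the first occurrence of u. -/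
noncomputable def r (u : List Letter) (p : ℕ) : List Letter :=
  if p = 0 then Dseg 1 (L u 1 - 1) else Dseg (L u p) (L u (p + 1) - L u p)

/-- The morphism τ₁ : a ↦ a, b ↦ bb, extended to words. -/
def tau1 : List Letter → List Letter :=
  fun w => w.flatMap fun x => match x with
    | .a => [.a]
    | .b => [.b, .b]
    | .c => [.c]

/-- The morphism τ₂ : a ↦ ab, b ↦ acac, extended to words. -/
def tau2 : List Letter → List Letter :=
  fun w => w.flatMap fun x => match x with
    | .a => [.a, .b]
    | .b => [.a, .c, .a, .c]
    | .c => [.c]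

/-- Θ₁[p], the p-th letter (p ≥ 1) of Θ₁ = τ₁(D): since |τ₁(w)| ≥ |w|, the p-th
letter of Θ₁ is the p-th letter of the image of the length-p prefix of D. -/
def Theta1 (p : ℕ) : Letter := (tau1 (Dseg 1 p)).getD (p - 1) .a

/-- Θ₂[p], the p-th letter (p ≥ 1) of Θ₂ = τ₂(D). -/
def Theta2 (p : ℕ) : Letter := (tau2 (Dseg 1 p)).getD (p - 1) .a

/-- The envelope word E_{1,m} = A_m with its last letter δ_m deleted. -/
def E1 (m : ℕ) : List Letter := (A m).dropLast

/-- The envelope word E_{2,m} = B_m B_{m−1} with its last letter δ_m deleted. -/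
def E2 (m : ℕ) : List Letter := (B m ++ B (m - 1)).dropLast

/-- Enumeration of the envelope words in the order
E_{1,1} ⊏ E_{2,1} ⊏ E_{1,2} ⊏ E_{2,2} ⊏ …. -/
def Eword (k : ℕ) : List Letter := if k % 2 = 0 then E1 (k / 2 + 1) else E2 (k / 2 + 1)

/-- Env(u): the ⊏-least envelope word having u as a factor. -/
noncomputable def Env (u : List Letter) : List Letter :=
  Eword (sInf {k | IsFactor u (Eword k)})

/-- The letterwise complement exchanging a and b. -/
def comp : Letter → Letter
  | .a => .b
  | .b => .a
  | .c => .c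


/-!
Positions in `D` are counted from 0 here. Since `D = σ(D)`, `D[2q] = a` and `D[2q+1]` is the
complement of `D[q]`, and the block of length `2^M` at position `2^M q` is `σ^M(D[q])`. As `A_M`
and `B_M` differ only in their last letter, induction on `m` shows that `E_{1,m+1}` occurs exactly
at the positions `2^m t` with `D[t] = a`. So consecutive occurrences correspond to consecutive
letters `a` of `D`, and the return word at `2^m t` is the `σ^m`-image of the gap from `t` to the
next `a`. Reading `D = σ(D)` as the concatenation of the blocks `σ(D[q])`, a block `ab` holds one
`a` followed by a gap `ab` (return word `A_{m+1}`) and a block `aa` holds two `a`s each followed by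
a gap `a` (return word `A_m`), which is how `τ₁` codes `D[q]`.
-/

lemma comp_eq_a_iff {x : Letter} : comp x = a ↔ x = b := by
  cases x <;> simp [comp]

lemma sigmaw_append (u v : List Letter) : sigmaw (u ++ v) = sigmaw u ++ sigmaw v :=
  List.flatMap_append

lemma sigmaw_cons_of_ne_c {x : Letter} (hx : x ≠ c) (w : List Letter) :
    sigmaw (x :: w) = a :: comp x :: sigmaw w := by
  cases x <;> simp_all [sigmaw, comp]

lemma iterate_sigmaw_append (m : ℕ) (u v : List Letter) :
    sigmaw^[m] (u ++ v) = sigmaw^[m] u ++ sigmaw^[m] v := by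
  induction m generalizing u v with
  | zero => rfl
  | succ m ih => simp only [Function.iterate_succ_apply, sigmaw_append, ih]

lemma c_not_mem_sigmaw {w : List Letter} (hw : c ∉ w) : c ∉ sigmaw w := by
  simp only [sigmaw, List.mem_flatMap, not_exists, not_and]
  rintro (_ | _ | _) hx <;> simp_all

lemma getElem?_sigmaw {w : List Letter} (hw : c ∉ w) (i : ℕ) :
    (sigmaw w)[2 * i]? = w[i]?.map (fun _ => a) ∧ (sigmaw w)[2 * i + 1]? = w[i]?.map comp := by
  induction w generalizing i with
  | nil => simp [sigmaw]
  | cons x w ih =>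
    rw [sigmaw_cons_of_ne_c (fun h => hw (h ▸ List.mem_cons_self)) w]
    cases i with
    | zero => simp
    | succ i => simpa [Nat.mul_succ] using ih (fun h => hw (List.mem_cons_of_mem x h)) i

lemma A_succ (m : ℕ) : A (m + 1) = A m ++ B m :=
  iterate_sigmaw_append m [a] [b]

lemma B_succ (m : ℕ) : B (m + 1) = A m ++ A m :=
  iterate_sigmaw_append m [a] [a]

lemma A_succ_eq_sigmaw (m : ℕ) : A (m + 1) = sigmaw (A m) :=
  Function.iterate_succ_apply' _ _ _

lemma length_A_and_B (m : ℕ) : (A m).length = 2 ^ m ∧ (B m).length = 2 ^ m := by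
  induction m with
  | zero => exact ⟨rfl, rfl⟩
  | succ m ih => simp [A_succ, B_succ, ih, pow_succ, mul_two]

lemma length_A (m : ℕ) : (A m).length = 2 ^ m := (length_A_and_B m).1

lemma length_B (m : ℕ) : (B m).length = 2 ^ m := (length_A_and_B m).2

lemma A_ne_nil (m : ℕ) : A m ≠ [] :=
  List.ne_nil_of_length_pos (by rw [length_A]; positivity)

lemma B_ne_nil (m : ℕ) : B m ≠ [] :=
  List.ne_nil_of_length_pos (by rw [length_B]; positivity)

lemma c_not_mem_A (m : ℕ) : c ∉ A m := by
  induction m with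
  | zero => decide
  | succ m ih => rw [A_succ_eq_sigmaw]; exact c_not_mem_sigmaw ih

lemma A_ne_B (m : ℕ) : A m ≠ B m := by
  induction m with
  | zero => decide
  | succ m ih =>
    rw [A_succ, B_succ]
    exact fun h => ih (List.append_cancel_left h).symm

lemma dropLast_A_eq_dropLast_B (m : ℕ) : (A m).dropLast = (B m).dropLast := by
  induction m with
  | zero => rfl
  | succ m ih =>
    rw [A_succ, B_succ, List.dropLast_append_of_ne_nil (B_ne_nil m),
      List.dropLast_append_of_ne_nil (A_ne_nil m), ih]

lemma E1_succ (m : ℕ) : E1 (m + 1) = A m ++ E1 m := by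
  rw [E1, A_succ, List.dropLast_append_of_ne_nil (B_ne_nil m), ← dropLast_A_eq_dropLast_B]
  rfl

lemma getElem?_A_add (M k : ℕ) {n : ℕ} (hn : n < 2 ^ M) : (A (M + k))[n]? = (A M)[n]? := by
  induction k with
  | zero => rfl
  | succ k ih =>
    have hlt : n < (A (M + k)).length :=
      (length_A _).symm ▸ hn.trans_le (Nat.pow_le_pow_right two_pos (Nat.le_add_right M k))
    rw [← Nat.add_assoc, A_succ, List.getElem?_append_left hlt, ih]

lemma getElem?_A {M n : ℕ} (hn : n < 2 ^ M) : (A M)[n]? = some (D n) := by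
  have hn' : n < 2 ^ (n + 1) :=
    n.lt_two_pow_self.trans (Nat.pow_lt_pow_right one_lt_two n.lt_succ_self)
  rw [← getElem?_A_add M (n + 1) hn, Nat.add_comm, getElem?_A_add (n + 1) M hn', D,
    List.getD_eq_getElem _ _ (by rwa [length_A]), List.getElem?_eq_getElem]

lemma D_ne_c (n : ℕ) : D n ≠ c := fun h =>
  c_not_mem_A n (h ▸ List.mem_of_getElem? (getElem?_A n.lt_two_pow_self))

lemma D_two_mul (q : ℕ) : D (2 * q) = a := by
  have hq : 2 * q < 2 ^ (q + 1) := by have := q.lt_two_pow_self; rw [pow_succ]; omega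
  have h := (getElem?_sigmaw (c_not_mem_A q) q).1
  rwa [← A_succ_eq_sigmaw, getElem?_A hq, getElem?_A q.lt_two_pow_self, Option.map_some,
    Option.some_inj] at h

lemma D_two_mul_add_one (q : ℕ) : D (2 * q + 1) = comp (D q) := by
  have hq : 2 * q + 1 < 2 ^ (q + 1) := by have := q.lt_two_pow_self; rw [pow_succ]; omega
  have h := (getElem?_sigmaw (c_not_mem_A q) q).2
  rwa [← A_succ_eq_sigmaw, getElem?_A hq, getElem?_A q.lt_two_pow_self, Option.map_some,
    Option.some_inj] at h

lemma D_succ_eq_a_of_ne_a {n : ℕ} (h : D n ≠ a) : D (n + 1) = a := by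
  obtain ⟨q, rfl | rfl⟩ := n.even_or_odd'
  · exact absurd (D_two_mul q) h
  · exact D_two_mul (q + 1)

lemma D_succ_eq_a_iff {t : ℕ} (ht : D t = a) : D (t + 1) = a ↔ D (t / 2) = b := by
  obtain ⟨q, rfl | rfl⟩ := t.even_or_odd'
  · rw [D_two_mul_add_one, comp_eq_a_iff, Nat.mul_div_cancel_left q two_pos]
  · rw [D_two_mul_add_one, comp_eq_a_iff] at ht
    rw [show 2 * q + 1 + 1 = 2 * (q + 1) by ring, D_two_mul, show (2 * q + 1) / 2 = q by omega]
    exact iff_of_true rfl ht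

lemma even_of_D_eq_a_of_D_add_two_eq_a {s : ℕ} (hs : D s = a) (hs₂ : D (s + 2) = a) :
    Even s := by
  obtain ⟨u, rfl | rfl⟩ := s.even_or_odd'
  · exact even_two_mul u
  · rw [D_two_mul_add_one, comp_eq_a_iff] at hs
    rw [show 2 * u + 1 + 2 = 2 * (u + 1) + 1 by ring, D_two_mul_add_one, comp_eq_a_iff,
      D_succ_eq_a_of_ne_a (by rw [hs]; decide)] at hs₂
    cases hs₂

lemma sigmaw_singleton_D (q : ℕ) : sigmaw [D q] = [D (2 * q), D (2 * q + 1)] := by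
  rw [D_two_mul, D_two_mul_add_one]
  exact sigmaw_cons_of_ne_c (D_ne_c q) []

lemma length_Dseg (i len : ℕ) : (Dseg i len).length = len := by
  simp [Dseg]

lemma Dseg_add (n k l : ℕ) : Dseg (n + 1) (k + l) = Dseg (n + 1) k ++ Dseg (n + k + 1) l := by
  simp [Dseg, List.range_add, Nat.add_assoc]

lemma Dseg_one_succ (q : ℕ) : Dseg 1 (q + 1) = Dseg 1 q ++ [D q] := by
  simpa [Dseg] using Dseg_add 0 q 1

lemma Dseg_block (M q : ℕ) : Dseg (2 ^ M * q + 1) (2 ^ M) = sigmaw^[M] [D q] := by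
  induction M generalizing q with
  | zero => simp [Dseg]
  | succ M ih =>
    rw [Function.iterate_succ_apply, sigmaw_singleton_D, ← List.singleton_append,
      iterate_sigmaw_append, ← ih, ← ih, pow_succ, mul_two, Dseg_add]
    congr 2 <;> ring

lemma Dseg_block_of_D_eq_a {M q : ℕ} (hq : D q = a) : Dseg (2 ^ M * q + 1) (2 ^ M) = A M := by
  rw [Dseg_block, hq]
  rfl

lemma DOccursAt_iff (u : List Letter) (n : ℕ) :
    DOccursAt u (n + 1) ↔ Dseg (n + 1) u.length = u := by
  simp [DOccursAt]

lemma DOccursAt_append_iff (u v : List Letter) (n : ℕ) :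
    DOccursAt (u ++ v) (n + 1) ↔ DOccursAt u (n + 1) ∧ DOccursAt v (n + u.length + 1) := by
  simp only [DOccursAt_iff, List.length_append, Dseg_add]
  exact ⟨fun h => List.append_inj h (length_Dseg _ _), fun ⟨hu, hv⟩ => by rw [hu, hv]⟩

lemma DOccursAt.dropLast {u : List Letter} {i : ℕ} (h : DOccursAt u i) :
    DOccursAt u.dropLast i := by
  obtain ⟨n, rfl⟩ : ∃ n, i = n + 1 := ⟨i - 1, by have := h.1; omega⟩
  rcases eq_or_ne u [] with rfl | hu
  · exact h
  · rw [← List.dropLast_append_getLast hu] at h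
    exact ((DOccursAt_append_iff _ _ n).1 h).1

lemma DOccursAt_A_block_iff (M q : ℕ) : DOccursAt (A M) (2 ^ M * q + 1) ↔ D q = a := by
  rw [DOccursAt_iff, length_A, Dseg_block]
  rcases hq : D q with _ | _ | _
  · exact iff_of_true rfl rfl
  · exact iff_of_false (A_ne_B M).symm (by decide)
  · exact absurd hq (D_ne_c q)

lemma DOccursAt_E1_block (M q : ℕ) : DOccursAt (E1 M) (2 ^ M * q + 1) := by
  have h : DOccursAt (sigmaw^[M] [D q]) (2 ^ M * q + 1) :=
    ⟨Nat.le_add_left 1 _, by rw [← Dseg_block, length_Dseg]⟩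
  rcases hq : D q with _ | _ | _
  · rw [hq] at h
    exact h.dropLast
  · rw [hq] at h
    rw [E1, dropLast_A_eq_dropLast_B]
    exact h.dropLast
  · exact absurd hq (D_ne_c q)

lemma DOccursAt_E1_succ_iff (m n : ℕ) :
    DOccursAt (E1 (m + 1)) (n + 1) ↔ ∃ t, n = 2 ^ m * t ∧ D t = a := by
  induction m generalizing n with
  | zero => simp [DOccursAt_iff, E1, A, sigmaw, Dseg]
  | succ m ih =>
    rw [E1_succ, DOccursAt_append_iff, length_A]
    constructor
    · rintro ⟨hA, hE⟩
      obtain ⟨s, rfl, hs⟩ := (ih n).1 hA.dropLast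
      obtain ⟨s', hs', hs'a⟩ := (ih _).1 hE
      have hss' : s' = s + 2 := by
        refine (Nat.eq_of_mul_eq_mul_left (Nat.two_pow_pos m) ?_).symm
        rw [← hs', pow_succ]
        ring
      obtain ⟨t, rfl⟩ := even_of_D_eq_a_of_D_add_two_eq_a hs (hss' ▸ hs'a)
      have hst : 2 ^ m * (t + t) = 2 ^ (m + 1) * t := by ring
      rw [hst, DOccursAt_A_block_iff] at hA
      exact ⟨t, hst, hA⟩
    · rintro ⟨t, rfl, ht⟩
      refine ⟨(DOccursAt_A_block_iff _ _).2 ht, ?_⟩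
      simpa [mul_add, Nat.add_assoc] using DOccursAt_E1_block (m + 1) (t + 1)

lemma infinite_setOf_D_eq_a : {t | D t = a}.Infinite :=
  Set.infinite_of_forall_exists_gt fun n => ⟨2 * (n + 1), D_two_mul _, by omega⟩

lemma L_E1_succ (m k : ℕ) : L (E1 (m + 1)) (k + 1) = 2 ^ m * Nat.nth (D · = a) k + 1 := by
  have hf : StrictMono fun t => 2 ^ m * t + 1 := fun _ _ h =>
    Nat.add_lt_add_right (Nat.mul_lt_mul_of_pos_left h (Nat.two_pow_pos m)) 1
  have hrange : ∀ i, DOccursAt (E1 (m + 1)) i → i ∈ Set.range fun t => 2 ^ m * t + 1 := by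
    rintro i hi
    obtain ⟨n, rfl⟩ : ∃ n, i = n + 1 := ⟨i - 1, by have := hi.1; omega⟩
    obtain ⟨t, rfl, -⟩ := (DOccursAt_E1_succ_iff m n).1 hi
    exact ⟨t, rfl⟩
  have hpull : (fun t => DOccursAt (E1 (m + 1)) (2 ^ m * t + 1)) = (D · = a) := by
    ext t
    rw [DOccursAt_E1_succ_iff]
    exact ⟨fun ⟨s, hs, h⟩ => Nat.eq_of_mul_eq_mul_left (Nat.two_pow_pos m) hs ▸ h,
      fun h => ⟨t, rfl, h⟩⟩
  have hinf : (Set.ofPred (DOccursAt (E1 (m + 1)))).Infinite := by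
    refine ((infinite_setOf_D_eq_a.image hf.injective.injOn).mono ?_)
    rintro _ ⟨t, ht, rfl⟩
    exact (DOccursAt_E1_succ_iff m _).2 ⟨t, rfl, ht⟩
  rw [L, Nat.add_sub_cancel, ← Nat.nth_comp_of_strictMono hf hrange (absurd · hinf), hpull]

lemma tau1_append (u v : List Letter) : tau1 (u ++ v) = tau1 u ++ tau1 v :=
  List.flatMap_append

lemma length_le_length_tau1 (w : List Letter) : w.length ≤ (tau1 w).length := by
  induction w with
  | nil => simp
  | cons x w ih =>
    rw [← List.singleton_append, tau1_append]
    cases x <;> simp [tau1] at ih ⊢ <;> omega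

lemma getD_tau1_singleton (x : Letter) {i : ℕ} (hi : i < (tau1 [x]).length) :
    (tau1 [x]).getD i a = x := by
  rcases i with _ | _ | i <;> cases x <;> simp_all [tau1]

lemma count_D_eq_a_two_mul (q : ℕ) : Nat.count (D · = a) (2 * q) = (tau1 (Dseg 1 q)).length := by
  induction q with
  | zero => rfl
  | succ q ih =>
    rw [show 2 * (q + 1) = 2 * q + 1 + 1 by ring, Nat.count_succ, Nat.count_succ, ih,
      Dseg_one_succ, tau1_append, D_two_mul, D_two_mul_add_one]
    rcases hq : D q with _ | _ | _
    · simp [comp, tau1]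
    · simp [comp, tau1]
    · exact absurd hq (D_ne_c q)

lemma Theta1_length_tau1_add {q i : ℕ} (hi : i < (tau1 [D q]).length) :
    Theta1 ((tau1 (Dseg 1 q)).length + i + 1) = D q := by
  have hq := length_le_length_tau1 (Dseg 1 q)
  rw [length_Dseg] at hq
  have hsplit : Dseg 1 ((tau1 (Dseg 1 q)).length + i + 1) =
      Dseg 1 q ++ [D q] ++ Dseg (q + 1 + 1) ((tau1 (Dseg 1 q)).length + i - q) := by
    have h := Dseg_add 0 (q + 1) ((tau1 (Dseg 1 q)).length + i - q)
    rw [Nat.zero_add, Nat.zero_add] at h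
    rw [← Dseg_one_succ, ← h]
    congr 1
    omega
  rw [Theta1, hsplit, Nat.add_sub_cancel, tau1_append, tau1_append,
    List.getD_append _ _ _ _ (by simp only [List.length_append]; omega),
    List.getD_append_right _ _ _ _ (Nat.le_add_right _ _), Nat.add_sub_cancel_left,
    getD_tau1_singleton _ hi]

lemma Theta1_count_succ {t : ℕ} (ht : D t = a) :
    Theta1 (Nat.count (D · = a) t + 1) = D (t / 2) := by
  obtain ⟨q, rfl | rfl⟩ := t.even_or_odd'
  · rw [count_D_eq_a_two_mul, Nat.mul_div_cancel_left q two_pos]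
    simpa using Theta1_length_tau1_add (q := q) (i := 0) (by cases D q <;> simp [tau1])
  · rw [D_two_mul_add_one, comp_eq_a_iff] at ht
    rw [Nat.count_succ, if_pos (D_two_mul q), count_D_eq_a_two_mul,
      show (2 * q + 1) / 2 = q by omega]
    exact Theta1_length_tau1_add (by simp [ht, tau1])

lemma two_mul_half_of_D_half_eq_a {t : ℕ} (ht : D t = a) (h : D (t / 2) = a) :
    2 * (t / 2) = t := by
  obtain ⟨q, rfl | rfl⟩ := t.even_or_odd'
  · omega
  · rw [show (2 * q + 1) / 2 = q by omega] at h
    rw [D_two_mul_add_one, h] at ht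
    cases ht

lemma nth_count_succ_of_D_half_eq_a {t : ℕ} (ht : D t = a) (h : D (t / 2) = a) :
    Nat.nth (D · = a) (Nat.count (D · = a) t + 1) = t + 2 := by
  have hnext : ¬D (t + 1) = a := by rw [D_succ_eq_a_iff ht, h]; decide
  calc Nat.nth (D · = a) (Nat.count (D · = a) t + 1)
      = Nat.nth (D · = a) (Nat.count (D · = a) (t + 2)) := by
        rw [Nat.count_succ, Nat.count_succ, if_pos ht, if_neg hnext]
    _ = t + 2 := Nat.nth_count (D_succ_eq_a_of_ne_a hnext)

lemma nth_count_succ_of_D_half_eq_b {t : ℕ} (ht : D t = a) (h : D (t / 2) = b) :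
    Nat.nth (D · = a) (Nat.count (D · = a) t + 1) = t + 1 := by
  calc Nat.nth (D · = a) (Nat.count (D · = a) t + 1)
      = Nat.nth (D · = a) (Nat.count (D · = a) (t + 1)) := by rw [Nat.count_succ, if_pos ht]
    _ = t + 1 := Nat.nth_count ((D_succ_eq_a_iff ht).2 h)

lemma r_E1_succ (m k : ℕ) : r (E1 (m + 1)) (k + 1) =
    Dseg (2 ^ m * Nat.nth (D · = a) k + 1)
      (2 ^ m * (Nat.nth (D · = a) (k + 1) - Nat.nth (D · = a) k)) := by
  rw [r, if_neg k.succ_ne_zero, L_E1_succ, L_E1_succ, Nat.mul_sub]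
  congr 1
  omega

/-- For every m ≥ 1 and p ≥ 1, the p-th return word of E_{1,m} in D is
A_m if Θ₁[p] = a and A_{m−1} if Θ₁[p] = b, i.e. {r_p(E_{1,m})}_{p≥1} is Θ₁ over
the alphabet {A_m, A_{m−1}}. -/
theorem return_words_of_E1 (m : ℕ) (hm : 1 ≤ m) (p : ℕ) (hp : 1 ≤ p) :
    (Theta1 p = .a → r (E1 m) p = A m) ∧
    (Theta1 p = .b → r (E1 m) p = A (m - 1)) := by
  obtain ⟨m, rfl⟩ : ∃ m', m = m' + 1 := ⟨m - 1, by omega⟩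
  obtain ⟨k, rfl⟩ : ∃ k, p = k + 1 := ⟨p - 1, by omega⟩
  obtain ⟨t, ht, rfl⟩ : ∃ t, D t = a ∧ Nat.count (D · = a) t = k :=
    ⟨_, Nat.nth_mem_of_infinite infinite_setOf_D_eq_a k,
      Nat.count_nth_of_infinite infinite_setOf_D_eq_a k⟩
  rw [r_E1_succ, Nat.nth_count ht, Theta1_count_succ ht, Nat.add_sub_cancel]
  refine ⟨fun h => ?_, fun h => ?_⟩
  · obtain ⟨q, rfl⟩ : ∃ q, t = 2 * q := ⟨t / 2, (two_mul_half_of_D_half_eq_a ht h).symm⟩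
    rw [nth_count_succ_of_D_half_eq_a ht h, Nat.add_sub_cancel_left, ← mul_assoc,
      mul_comm (2 ^ m) 2, ← pow_succ']
    rw [Nat.mul_div_cancel_left q two_pos] at h
    exact Dseg_block_of_D_eq_a h
  · rw [nth_count_succ_of_D_half_eq_b ht h, Nat.add_sub_cancel_left, mul_one]
    exact Dseg_block_of_D_eq_a ht
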